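/- (Incentive compatibility in expectation) Fix the bids of all other LSEs. Under the SVCG-RANDOM payments, LSE i's expected payoff when bidding σ̂_i equals [contribution of i under the welfare-maximizing selection for bids (σ̂_i, σ̂_{−i}), evaluated with i's true value v_i and true cost γ_i] plus [reported expected welfare of other selected LSEs] minus V^{−i}; since V^{−i} does not depend on σ̂_i and the bracketed sum is maximized over selections when σ̂_i = σ_i, truthful bidding weakly maximizes LSE i's expected payoff. -/
import Mathlib


open Finset

/-- Rank of LSE `i` in selection `S` under reported costs `γh`. -/
noncomputable def rnk {ι : Type*} [DecidableEq ι] (γh : ι → ℝ) (S : Finset ι) (i : ι) : ℕ :=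
  (S.filter (fun j => γh i ≤ γh j)).card

/-- Reported expected welfare of a selection `S` for bid profile `(vh, γh)`; the generator
selects a subset maximizing this quantity (ranking members by decreasing reported `γh`). -/
noncomputable def repWelfare {ι : Type*} [DecidableEq ι] (p : ℕ → ℝ) (vh γh : ι → ℝ)
    (S : Finset ι) : ℝ :=
  ∑ j ∈ S, (vh j - γh j * ∑ w ∈ Finset.range (rnk γh S j), p w)

/-- LSE `i`'s expected payoff under the SVCG-RANDOM payments when the generator, facing
reports `(vh, γh)`, chooses selection `S`: it equals `i`'s true expected utility under the
induced ranking, plus the reported expected welfare of the other selected LSEs, minus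
`V^{−i}` (the externality-based net payment makes the total take this Groves form). -/
noncomputable def svcgPayoff {ι : Type*} [DecidableEq ι] (p : ℕ → ℝ) (v γ vh γh : ι → ℝ)
    (i : ι) (S : Finset ι) (Vmi : ℝ) : ℝ :=
  (if i ∈ S then v i - γ i * ∑ w ∈ Finset.range (rnk γh S i), p w else 0)
    + (∑ j ∈ S.erase i, (vh j - γh j * ∑ w ∈ Finset.range (rnk γh S j), p w)) - Vmi

section aux
variable {ι : Type*} [DecidableEq ι]

/-- Under an injective cost report, ranks are distinct within a selection. -/
lemma rnk_injOn (γ : ι → ℝ) (hγ : Function.Injective γ) (S : Finset ι) :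
    Set.InjOn (rnk γ S) S := by
  intro j hj k hk h
  have key : ∀ a ∈ S, ∀ b : ι, γ a < γ b → rnk γ S b < rnk γ S a := by
    intro a ha b hlt
    apply Finset.card_lt_card
    constructor
    · intro x hx
      simp only [mem_filter] at *
      exact ⟨hx.1, hlt.le.trans hx.2⟩
    · intro hsub
      have := hsub (mem_filter.mpr ⟨ha, le_refl _⟩)
      exact absurd (mem_filter.mp this).2 (not_le.mpr hlt)
  rcases lt_trichotomy (γ j) (γ k) with hlt | heq | hlt
  · exact absurd h (Nat.ne_of_gt (key j hj k hlt))
  · exact hγ heq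
  · exact absurd h (Nat.ne_of_lt (key k hk j hlt))

lemma rnk_pos (γ : ι → ℝ) (S : Finset ι) {j : ι} (hj : j ∈ S) : 1 ≤ rnk γ S j :=
  Finset.card_pos.mpr ⟨j, mem_filter.mpr ⟨hj, le_refl _⟩⟩

lemma rnk_le (γ : ι → ℝ) (S : Finset ι) (j : ι) : rnk γ S j ≤ S.card :=
  Finset.card_le_card (filter_subset _ _)

/-- Under an injective cost report, the ranks of a selection are exactly `1, …, |S|`. -/
lemma rnk_image (γ : ι → ℝ) (hγ : Function.Injective γ) (S : Finset ι) :
    S.image (rnk γ S) = Finset.Icc 1 S.card := by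
  apply Finset.eq_of_subset_of_card_le
  · intro r hr
    obtain ⟨j, hj, rfl⟩ := Finset.mem_image.mp hr
    exact Finset.mem_Icc.mpr ⟨rnk_pos γ S hj, rnk_le γ S j⟩
  · rw [Nat.card_Icc, Finset.card_image_of_injOn (rnk_injOn γ hγ S)]
    omega

/-- The number of members ranked below position `w` does not depend on the cost report
(as long as it is injective). -/
lemma card_filter_rnk (γ : ι → ℝ) (hγ : Function.Injective γ) (S : Finset ι) (w : ℕ) :
    (S.filter (fun j => w < rnk γ S j)).card
      = ((Finset.Icc 1 S.card).filter (fun r => w < r)).card := by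
  rw [← rnk_image γ hγ S, Finset.filter_image,
    Finset.card_image_of_injOn ((rnk_injOn γ hγ S).mono
      (Finset.coe_subset.mpr (Finset.filter_subset _ _)))]

/-- A "down-closed" set (closed under taking elements of smaller `γ`) has the smallest
`γ`-sum among subsets of `S` of its cardinality. -/
lemma sum_le_sum_of_downclosed (γ : ι → ℝ) (S A T : Finset ι)
    (hT : T ⊆ S)
    (hdc : ∀ j ∈ A, ∀ k ∈ S, γ k ≤ γ j → k ∈ A)
    (hcard : A.card = T.card) :
    ∑ j ∈ A, γ j ≤ ∑ j ∈ T, γ j := by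
  have hcard2 : (A \ T).card = (T \ A).card := by
    have h1 := Finset.card_sdiff_add_card_inter A T
    have h2 := Finset.card_sdiff_add_card_inter T A
    rw [Finset.inter_comm T A] at h2
    omega
  have key : ∀ x ∈ A \ T, ∀ z ∈ T \ A, γ x < γ z := by
    intro x hx z hz
    rcases Finset.mem_sdiff.mp hx with ⟨hxA, _⟩
    rcases Finset.mem_sdiff.mp hz with ⟨hzT, hzA⟩
    by_contra h
    exact hzA (hdc x hxA z (hT hzT) (not_lt.mp h))
  have main : ∑ j ∈ A \ T, γ j ≤ ∑ j ∈ T \ A, γ j := by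
    rcases Finset.eq_empty_or_nonempty (T \ A) with he | hne
    · have hAe : A \ T = ∅ := Finset.card_eq_zero.mp (by rw [hcard2, he]; simp)
      simp [hAe, he]
    · obtain ⟨z₀, hz₀, hmin⟩ := Finset.exists_min_image (T \ A) γ hne
      calc ∑ j ∈ A \ T, γ j ≤ ∑ _j ∈ A \ T, γ z₀ :=
              Finset.sum_le_sum fun x hx => (key x hx z₀ hz₀).le
        _ = (A \ T).card • γ z₀ := by rw [Finset.sum_const]
        _ = (T \ A).card • γ z₀ := by rw [hcard2]
        _ ≤ ∑ j ∈ T \ A, γ j := Finset.card_nsmul_le_sum _ _ _ hmin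
  have eA := Finset.sum_inter_add_sum_sdiff A T γ
  have eT := Finset.sum_inter_add_sum_sdiff T A γ
  rw [Finset.inter_comm T A] at eT
  linarith

/-- Exchange of summation: total expected cost of a ranked selection, sliced by rank. -/
lemma sum_mul_c (p : ℕ → ℝ) (γ : ι → ℝ) (S : Finset ι) (r : ι → ℕ)
    (hr : ∀ j ∈ S, r j ≤ S.card) :
    ∑ j ∈ S, γ j * ∑ w ∈ Finset.range (r j), p w
      = ∑ w ∈ Finset.range S.card, ∑ j ∈ S.filter (fun j => w < r j), γ j * p w := by
  have h1 : ∀ j ∈ S, γ j * ∑ w ∈ Finset.range (r j), p w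
      = ∑ w ∈ Finset.range S.card, if w < r j then γ j * p w else 0 := by
    intro j hj
    rw [Finset.mul_sum, ← Finset.sum_filter]
    apply Finset.sum_congr _ (fun _ _ => rfl)
    ext w
    simp only [Finset.mem_filter, Finset.mem_range]
    exact ⟨fun h => ⟨h.trans_le (hr j hj), h⟩, fun h => h.2⟩
  rw [Finset.sum_congr rfl h1, Finset.sum_comm]
  exact Finset.sum_congr rfl fun w _ => (Finset.sum_filter _ _).symm

/-- Rearrangement step: ranking by the true costs `γt` minimizes the true expected cost,
compared with the ranking induced by any other (injective) report `γd`. -/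
lemma key_ineq (p : ℕ → ℝ) (hp : ∀ w, 0 ≤ p w) (γt γd : ι → ℝ)
    (ht : Function.Injective γt) (hd : Function.Injective γd) (S : Finset ι) :
    ∑ j ∈ S, γt j * ∑ w ∈ Finset.range (rnk γt S j), p w
      ≤ ∑ j ∈ S, γt j * ∑ w ∈ Finset.range (rnk γd S j), p w := by
  rw [sum_mul_c p γt S _ (fun j _ => rnk_le γt S j),
      sum_mul_c p γt S _ (fun j _ => rnk_le γd S j)]
  apply Finset.sum_le_sum
  intro w _
  rw [← Finset.sum_mul, ← Finset.sum_mul]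
  apply mul_le_mul_of_nonneg_right _ (hp w)
  apply sum_le_sum_of_downclosed γt S _ _ (Finset.filter_subset _ _)
  · intro j hj k hk hle
    rw [Finset.mem_filter] at hj ⊢
    refine ⟨hk, lt_of_lt_of_le hj.2 ?_⟩
    unfold rnk
    exact Finset.card_le_card (fun x hx => by
      rw [Finset.mem_filter] at hx ⊢
      exact ⟨hx.1, hle.trans hx.2⟩)
  · rw [card_filter_rnk γt ht S w, card_filter_rnk γd hd S w]

/-- When `i` reports its true type, the Groves payoff is the reported welfare minus `V^{−i}`. -/
lemma svcg_eq (p : ℕ → ℝ) (v γ vh γh : ι → ℝ) (i : ι) (S : Finset ι) (Vmi : ℝ)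
    (hvi : vh i = v i) (hgi : γh i = γ i) :
    svcgPayoff p v γ vh γh i S Vmi = repWelfare p vh γh S - Vmi := by
  unfold svcgPayoff repWelfare
  by_cases hi : i ∈ S
  · rw [if_pos hi, ← hvi, ← hgi,
      Finset.add_sum_erase S (fun j => vh j - γh j * ∑ w ∈ Finset.range (rnk γh S j), p w) hi]
  · rw [if_neg hi, Finset.erase_eq_of_notMem hi]
    ring

/-- The deviation payoff: truthful type of `i`, but ranking by the deviant report. -/
lemma svcg_dev_eq (p : ℕ → ℝ) (v γ vh γh : ι → ℝ) (i : ι) (bv bγ : ℝ)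
    (S : Finset ι) (Vmi : ℝ) :
    svcgPayoff p v γ (Function.update vh i bv) (Function.update γh i bγ) i S Vmi
      = ∑ j ∈ S, (Function.update vh i (v i) j
          - Function.update γh i (γ i) j
              * ∑ w ∈ Finset.range (rnk (Function.update γh i bγ) S j), p w) - Vmi := by
  unfold svcgPayoff
  by_cases hi : i ∈ S
  · rw [if_pos hi, ← Finset.add_sum_erase S _ hi]
    simp only [Function.update_self]
    congr 2
    apply Finset.sum_congr rfl
    intro j hj
    have hji : j ≠ i := Finset.ne_of_mem_erase hj
    simp only [Function.update_of_ne hji]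
  · rw [if_neg hi, Finset.erase_eq_of_notMem hi, zero_add]
    congr 1
    apply Finset.sum_congr rfl
    intro j hj
    have hji : j ≠ i := fun h => hi (h ▸ hj)
    simp only [Function.update_of_ne hji]
end aux

/-- Incentive compatibility in expectation: Fix the other LSEs' bids
`(vh, γh)` off `i` and a true type `(v i, γ i)`. If `St` is a reported-welfare-maximizing
selection when `i` bids truthfully, and `Sd` is one when `i` deviates to `(bv, bγ)`, then
— since `V^{−i}` does not depend on `i`'s bid and the Groves sum is maximized at the
truthful report — `i`'s expected payoff under the deviation is at most that under truth. -/
theorem stmt14 {ι : Type*} [Fintype ι] [DecidableEq ι] (p : ℕ → ℝ) (v γ vh γh : ι → ℝ)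
    (i : ι) (bv bγ : ℝ) (Vmi : ℝ) (St Sd : Finset ι)
    (hp : ∀ w, 0 ≤ p w)
    (hinjt : Function.Injective (Function.update γh i (γ i)))
    (hinjd : Function.Injective (Function.update γh i bγ))
    (hSt : ∀ S : Finset ι,
      repWelfare p (Function.update vh i (v i)) (Function.update γh i (γ i)) S
        ≤ repWelfare p (Function.update vh i (v i)) (Function.update γh i (γ i)) St)
    (hSd : ∀ S : Finset ι,
      repWelfare p (Function.update vh i bv) (Function.update γh i bγ) S
        ≤ repWelfare p (Function.update vh i bv) (Function.update γh i bγ) Sd) :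
    svcgPayoff p v γ (Function.update vh i bv) (Function.update γh i bγ) i Sd Vmi
      ≤ svcgPayoff p v γ (Function.update vh i (v i)) (Function.update γh i (γ i)) i St Vmi := by
  set vt := Function.update vh i (v i) with hvt
  set γt := Function.update γh i (γ i) with hγt
  set γd := Function.update γh i bγ with hγd
  have h1 := svcg_dev_eq p v γ vh γh i bv bγ Sd Vmi
  have h2 : svcgPayoff p v γ vt γt i St Vmi = repWelfare p vt γt St - Vmi :=
    svcg_eq p v γ vt γt i St Vmi (Function.update_self _ _ _) (Function.update_self _ _ _)
  rw [h1, h2]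
  have h3 : ∑ j ∈ Sd, (vt j - γt j * ∑ w ∈ Finset.range (rnk γd Sd j), p w)
      ≤ repWelfare p vt γt Sd := by
    unfold repWelfare
    rw [Finset.sum_sub_distrib, Finset.sum_sub_distrib]
    have := key_ineq p hp γt γd hinjt hinjd Sd
    linarith
  have h4 := hSt Sd
  linarith
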